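/- arXiv:1111.6413 — 2 statements merged into one kernel-verified Lean document; each statement's English description precedes it below -/
import Mathlib

section
/- For I-diagrams of sets X and Y, the canonical map colim_I (X ⊠ Y) → (colim_I X) × (colim_I Y) induced by the universal property is a bijection; that is, the colimit functor colim_I : Set^I → Set is strong symmetric monoidal with respect to Day convolution on the source and cartesian product on the target. -/
open CategoryTheory

/-- Objects of the category `I`: the finite sets `𝐧 = {1,…,n}`, encoded by their size. -/
structure IObj : Type where
  n : ℕ

/-- The category `I` of finite sets and injections. -/
instance : Category IObj where
  Hom a b := Fin a.n ↪ Fin b.n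
  id a := Function.Embedding.refl _
  comp f g := f.trans g
  id_comp _ := rfl
  comp_id _ := rfl
  assoc _ _ _ := rfl

/-- Concatenation of injections. -/
def concatMap {m m' n n' : ℕ} (f : Fin m ↪ Fin m') (g : Fin n ↪ Fin n') :
    Fin (m + n) ↪ Fin (m' + n') where
  toFun x :=
    if h : (x : ℕ) < m then ⟨(f ⟨x, h⟩ : ℕ), by have := (f ⟨x, h⟩).isLt; omega⟩
    else ⟨m' + (g ⟨(x : ℕ) - m, by omega⟩ : ℕ), by have := (g ⟨(x : ℕ) - m, by omega⟩).isLt; omega⟩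
  inj' := by
    intro a b hab
    have hv := congrArg Fin.val hab
    by_cases h1 : (a : ℕ) < m <;> by_cases h2 : (b : ℕ) < m <;>
      simp only [h1, h2, dif_pos, dif_neg, not_false_iff] at hv
    · have h3 : f ⟨(a : ℕ), h1⟩ = f ⟨(b : ℕ), h2⟩ := Fin.ext hv
      have h4 := congrArg Fin.val (f.injective h3)
      exact Fin.ext h4
    · exact absurd hv (by have := (f ⟨(a : ℕ), h1⟩).isLt; omega)
    · exact absurd hv (by have := (f ⟨(b : ℕ), h2⟩).isLt; omega)
    · have hg : (g ⟨(a : ℕ) - m, by omega⟩ : ℕ) = (g ⟨(b : ℕ) - m, by omega⟩ : ℕ) := by omega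
      have h4 := congrArg Fin.val (g.injective (Fin.ext hg))
      simp only at h4
      exact Fin.ext (by omega)

lemma concatMap_val_lt {m m' n n' : ℕ} (f : Fin m ↪ Fin m') (g : Fin n ↪ Fin n')
    (x : Fin (m + n)) (h : (x : ℕ) < m) :
    ((concatMap f g) x : ℕ) = (f ⟨(x : ℕ), h⟩ : ℕ) := by
  show ((if h : (x : ℕ) < m then _ else _ : Fin (m' + n')) : ℕ) = _
  rw [dif_pos h]

lemma concatMap_val_ge {m m' n n' : ℕ} (f : Fin m ↪ Fin m') (g : Fin n ↪ Fin n')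
    (x : Fin (m + n)) (h : ¬ (x : ℕ) < m) :
    ((concatMap f g) x : ℕ) = m' + (g ⟨(x : ℕ) - m, by omega⟩ : ℕ) := by
  show ((if h : (x : ℕ) < m then _ else _ : Fin (m' + n')) : ℕ) = _
  rw [dif_neg h]

/-- View a morphism of `I` as an embedding. -/
abbrev toEmb {a b : IObj} (f : a ⟶ b) : Fin a.n ↪ Fin b.n := f

/-- The concatenation (symmetric monoidal) functor `⊔ : I × I → I`. -/
def concatF : IObj × IObj ⥤ IObj where
  obj p := ⟨p.1.n + p.2.n⟩
  map {p q} f := concatMap f.1 f.2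
  map_id := by
    intro p
    apply Function.Embedding.ext
    intro x
    apply Fin.ext
    have hx : (x : ℕ) < p.1.n + p.2.n := x.isLt
    change ((concatMap (Function.Embedding.refl (Fin p.1.n))
      (Function.Embedding.refl (Fin p.2.n))) x : ℕ) = (x : ℕ)
    by_cases h : (x : ℕ) < p.1.n
    · rw [concatMap_val_lt _ _ _ h]; rfl
    · rw [concatMap_val_ge _ _ _ h]
      have h5 : (Function.Embedding.refl (Fin p.2.n) ⟨(x : ℕ) - p.1.n, by omega⟩ : ℕ)
          = (x : ℕ) - p.1.n := rfl
      omega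
  map_comp := by
    intro p q r f g
    obtain ⟨f1, f2⟩ := f
    obtain ⟨g1, g2⟩ := g
    apply Function.Embedding.ext
    intro x
    apply Fin.ext
    have hx : (x : ℕ) < p.1.n + p.2.n := x.isLt
    change ((concatMap ((toEmb f1).trans (toEmb g1)) ((toEmb f2).trans (toEmb g2))) x : ℕ)
      = ((concatMap (toEmb g1) (toEmb g2)) ((concatMap (toEmb f1) (toEmb f2)) x) : ℕ)
    by_cases h : (x : ℕ) < p.1.n
    · rw [concatMap_val_lt _ _ _ h]
      have hy := concatMap_val_lt (toEmb f1) (toEmb f2) x h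
      have hcond : ((concatMap (toEmb f1) (toEmb f2)) x : ℕ) < q.1.n := by
        rw [hy]; exact ((toEmb f1) ⟨(x : ℕ), h⟩).isLt
      rw [concatMap_val_lt (toEmb g1) (toEmb g2) _ hcond]
      have harg : (⟨((concatMap (toEmb f1) (toEmb f2)) x : ℕ), hcond⟩ : Fin q.1.n)
          = (toEmb f1) ⟨(x : ℕ), h⟩ := Fin.ext hy
      exact (congrArg (fun z : Fin q.1.n => ((toEmb g1) z : ℕ)) harg).symm
    · rw [concatMap_val_ge _ _ _ h]
      have hy := concatMap_val_ge (toEmb f1) (toEmb f2) x h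
      have hcond : ¬ ((concatMap (toEmb f1) (toEmb f2)) x : ℕ) < q.1.n := by omega
      rw [concatMap_val_ge (toEmb g1) (toEmb g2) _ hcond]
      have harg : (⟨((concatMap (toEmb f1) (toEmb f2)) x : ℕ) - q.1.n, by omega⟩ : Fin q.2.n)
          = (toEmb f2) ⟨(x : ℕ) - p.1.n, by omega⟩ := Fin.ext (by
            show ((concatMap (toEmb f1) (toEmb f2)) x : ℕ) - q.1.n
              = ((toEmb f2) ⟨(x : ℕ) - p.1.n, by omega⟩ : ℕ)
            omega)
      exact (congrArg (fun z : Fin q.2.n => r.1.n + ((toEmb g2) z : ℕ)) harg).symm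

/-- The external product of two `I`-diagrams of sets. -/
@[simps]
def extProd (X Y : IObj ⥤ Type) : IObj × IObj ⥤ Type where
  obj p := X.obj p.1 × Y.obj p.2
  map f := TypeCat.ofHom fun a => (X.map f.1 a.1, Y.map f.2 a.2)
  map_id := by intro p; apply ConcreteCategory.hom_ext; intro a; simp
  map_comp := by intro p q r f g; apply ConcreteCategory.hom_ext; intro a; simp

/-- Day convolution `X ⊠ Y` of `I`-diagrams of sets: the left Kan extension of the
external product along concatenation. -/
noncomputable def dayConv (X Y : IObj ⥤ Type) : IObj ⥤ Type :=
  (Functor.lan concatF).obj (extProd X Y)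

open Limits

/-- The cocone on `X ⊠ Y` with point `colim X × colim Y`, obtained via the universal
property of the left Kan extension from the canonical maps
`X(𝐦) × Y(𝐧) → colim X × colim Y`. -/
noncomputable def prodCocone (X Y : IObj ⥤ Type) : Cocone (dayConv X Y) where
  pt := colimit X × colimit Y
  ι := ((concatF.lanAdjunction Type).homEquiv (extProd X Y)
      ((Functor.const IObj).obj (colimit X × colimit Y))).symm
    { app := fun p => TypeCat.ofHom fun z => (colimit.ι X p.1 z.1, colimit.ι Y p.2 z.2)
      naturality := by
        intro p q f
        apply ConcreteCategory.hom_ext; intro z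
        show (colimit.ι X q.1 (X.map f.1 z.1), colimit.ι Y q.2 (Y.map f.2 z.2)) = _
        have hx := ConcreteCategory.congr_hom (colimit.w X f.1) z.1
        have hy := ConcreteCategory.congr_hom (colimit.w Y f.2) z.2
        simp only [types_comp_apply] at hx hy
        rw [hx, hy]
        rfl }

/-! The colimit of `Lan_⊔ (X ⊠ Y)` is the colimit of the external product `(m, n) ↦ X(m) × Y(n)`
over `I × I`, since left Kan extension preserves colimits, and `prodCocone` is exactly the cocone
transported along the Kan extension. In sets, the colimit of the external product is
`colim X × colim Y` because products commute with colimits in each variable; the inverse is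
obtained by currying, as a colimit over `X` of maps out of `colim Y`. -/

namespace CategoryTheory.Limits.Types

theorem nonempty_isColimit_iff_bijective_colimitDesc {J : Type*} [Category J] {F : J ⥤ Type*}
    [HasColimit F] (s : Cocone F) :
    Nonempty (IsColimit s) ↔ Function.Bijective (colimit.desc F s) := by
  rw [(colimit.isColimit F).nonempty_isColimit_iff_isIso_desc, isIso_iff_bijective]
  rfl

end CategoryTheory.Limits.Types

namespace CategoryTheory.Functor

variable {C D H : Type*} [Category C] [Category D] [Category H] (L : C ⥤ D)
  [∀ E : C ⥤ H, L.HasLeftKanExtension E]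

theorem lanAdjunction_homEquiv_symm_eq_descOfIsLeftKanExtension (E : C ⥤ H) (G : D ⥤ H)
    (β : E ⟶ L ⋙ G) :
    ((L.lanAdjunction H).homEquiv E G).symm β =
      (L.lan.obj E).descOfIsLeftKanExtension (L.lanUnit.app E) G β := by
  simp [lanAdjunction, homEquivOfIsLeftKanExtension]

theorem nonempty_isColimit_lanAdjunction_homEquiv_symm {E : C ⥤ H} {c : Cocone E}
    (hc : IsColimit c) :
    Nonempty (IsColimit
      (Cocone.mk c.pt (((L.lanAdjunction H).homEquiv E ((const D).obj c.pt)).symm c.ι))) := by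
  rw [lanAdjunction_homEquiv_symm_eq_descOfIsLeftKanExtension]
  exact ⟨(L.lan.obj E).isColimitCoconeOfIsLeftKanExtension (L.lanUnit.app E) hc⟩

end CategoryTheory.Functor

section ExternalProduct

variable (X Y : IObj ⥤ Type)

noncomputable def extProdCocone : Cocone (extProd X Y) where
  pt := colimit X × colimit Y
  ι :=
    { app p := TypeCat.ofHom fun z => (colimit.ι X p.1 z.1, colimit.ι Y p.2 z.2)
      naturality _ _ f := by
        ext ⟨x, y⟩
        exact Prod.ext (colimit.w_apply X f.1 x :) (colimit.w_apply Y f.2 y :) }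

theorem extProdCocone_desc_ι (m n : IObj) (x : X.obj m) (y : Y.obj n) :
    colimit.desc (extProd X Y) (extProdCocone X Y) (colimit.ι (extProd X Y) (m, n) (x, y)) =
      (colimit.ι X m x, colimit.ι Y n y) :=
  colimit.ι_desc_apply (extProdCocone X Y) (m, n) ((x, y) : X.obj m × Y.obj n)

theorem colimit_ι_extProd_map {m m' n n' : IObj} (f : m ⟶ m') (g : n ⟶ n') (x : X.obj m)
    (y : Y.obj n) :
    colimit.ι (extProd X Y) (m', n') (X.map f x, Y.map g y) =
      colimit.ι (extProd X Y) (m, n) (x, y) :=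
  colimit.w_apply (extProd X Y) ((f, g) : (m, n) ⟶ (m', n')) ((x, y) : X.obj m × Y.obj n)

noncomputable def extProdCurryCocone (m : IObj) (x : X.obj m) : Cocone Y where
  pt := colimit (extProd X Y)
  ι :=
    { app n := TypeCat.ofHom fun y => colimit.ι (extProd X Y) (m, n) (x, y)
      naturality _ _ g := by
        ext y
        simpa using colimit_ι_extProd_map X Y (𝟙 m) g x y }

noncomputable def extProdCurriedCocone : Cocone X where
  pt := colimit Y → colimit (extProd X Y)
  ι :=
    { app m := TypeCat.ofHom fun x => ⇑(colimit.desc Y (extProdCurryCocone X Y m x))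
      naturality m m' f := by
        refine ConcreteCategory.hom_ext _ _ fun x => funext fun c => ?_
        obtain ⟨n, y, rfl⟩ := Types.jointly_surjective' c
        show colimit.desc Y (extProdCurryCocone X Y m' (X.map f x)) (colimit.ι Y n y) =
          colimit.desc Y (extProdCurryCocone X Y m x) (colimit.ι Y n y)
        rw [colimit.ι_desc_apply, colimit.ι_desc_apply]
        have h := colimit_ι_extProd_map X Y f (𝟙 n) x y
        rw [Functor.map_id_apply] at h
        exact h }

noncomputable def colimitExtProdOfProd (c : colimit X × colimit Y) : colimit (extProd X Y) :=
  colimit.desc X (extProdCurriedCocone X Y) c.1 c.2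

theorem colimitExtProdOfProd_ι (m n : IObj) (x : X.obj m) (y : Y.obj n) :
    colimitExtProdOfProd X Y (colimit.ι X m x, colimit.ι Y n y) =
      colimit.ι (extProd X Y) (m, n) (x, y) := by
  show colimit.desc X (extProdCurriedCocone X Y) (colimit.ι X m x) (colimit.ι Y n y) = _
  rw [colimit.ι_desc_apply]
  exact colimit.ι_desc_apply (extProdCurryCocone X Y m x) n y

theorem bijective_colimitDesc_extProdCocone :
    Function.Bijective (colimit.desc (extProd X Y) (extProdCocone X Y)) := by
  refine Function.bijective_iff_has_inverse.mpr ⟨colimitExtProdOfProd X Y, ?_, ?_⟩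
  · intro c
    obtain ⟨⟨m, n⟩, ⟨x, y⟩, rfl⟩ := Types.jointly_surjective' c
    rw [extProdCocone_desc_ι, colimitExtProdOfProd_ι]
  · rintro ⟨cx, cy⟩
    obtain ⟨m, x, rfl⟩ := Types.jointly_surjective' cx
    obtain ⟨n, y, rfl⟩ := Types.jointly_surjective' cy
    rw [colimitExtProdOfProd_ι, extProdCocone_desc_ι]

end ExternalProduct

/-- the canonical map `colim_I (X ⊠ Y) → (colim_I X) × (colim_I Y)` induced
by the universal property is a bijection, i.e. the colimit functor is strong symmetric
monoidal with respect to Day convolution and the cartesian product. -/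
theorem colimit_dayConv_bijective (X Y : IObj ⥤ Type) :
    Function.Bijective (colimit.desc (dayConv X Y) (prodCocone X Y)) := by
  obtain ⟨hExtProd⟩ := (Types.nonempty_isColimit_iff_bijective_colimitDesc _).mpr
    (bijective_colimitDesc_extProdCocone X Y)
  have hDayConv : Nonempty (IsColimit (prodCocone X Y)) :=
    concatF.nonempty_isColimit_lanAdjunction_homEquiv_symm hExtProd
  exact (Types.nonempty_isColimit_iff_bijective_colimitDesc _).mp hDayConv
end

section
/- There exists a pullback square in the category of commutative monoids that is not preserved by group completion. Concretely: with M = ℕ ∪ {0'} as above, the square with top-left {0,0'} (a two-element subgroup of M with 0'+0'=0), top-right the trivial monoid {0}, bottom-left M, bottom-right ℤ (the group completion of M), with the evident maps, is a pullback of commutative monoids; but applying group completion yields the square ℤ/2 → 0 → ℤ which is not a pullback, because ℤ/2 → ℤ is not injective while the pullback of 0 → ℤ ← ℤ is trivial. -/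
/-- The commutative monoid `M = ℕ ∪ {0'}`: `Option.some n` is the element `n ∈ ℕ` and
`Option.none` is the extra element `0'`. -/
def M7 : Type := Option ℕ

/-- Addition on `M7`, extending that of `ℕ` by `0' + 0' = 0`, `0 + 0' = 0'`,
and `0' + n = n` for `n ≥ 1`. -/
def M7.add : M7 → M7 → M7
  | Option.none, Option.none => Option.some 0
  | Option.none, Option.some 0 => Option.none
  | Option.some 0, Option.none => Option.none
  | Option.none, Option.some (n + 1) => Option.some (n + 1)
  | Option.some (n + 1), Option.none => Option.some (n + 1)
  | Option.some a, Option.some b => Option.some (a + b)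

theorem M7.add_assoc' (a b c : M7) : M7.add (M7.add a b) c = M7.add a (M7.add b c) := by
  rcases a with _ | (_ | a) <;> rcases b with _ | (_ | b) <;> rcases c with _ | (_ | c) <;>
    simp [M7.add, Nat.succ_eq_add_one] <;> first | rfl | exact congrArg Option.some (by omega)

theorem M7.zero_add' (a : M7) : M7.add (Option.some 0) a = a := by
  rcases a with _ | (_ | a) <;> simp [M7.add, Nat.succ_eq_add_one] <;> first | rfl | exact congrArg Option.some (by omega)

theorem M7.add_zero' (a : M7) : M7.add a (Option.some 0) = a := by
  rcases a with _ | (_ | a) <;> simp [M7.add, Nat.succ_eq_add_one] <;> first | rfl | exact congrArg Option.some (by omega)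

theorem M7.add_comm' (a b : M7) : M7.add a b = M7.add b a := by
  rcases a with _ | (_ | a) <;> rcases b with _ | (_ | b) <;> simp [M7.add, Nat.succ_eq_add_one] <;> first | rfl | exact congrArg Option.some (by omega)

instance : Zero M7 := ⟨Option.some 0⟩
instance : Add M7 := ⟨M7.add⟩

instance : AddCommMonoid M7 where
  add_assoc := M7.add_assoc'
  zero_add := M7.zero_add'
  add_zero := M7.add_zero'
  add_comm := M7.add_comm'
  nsmul := nsmulRec

/-- The extra element `0'` of `M7`. -/
def M7.zero' : M7 := Option.none

/-- The inclusion `ℕ → M7`. -/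
def M7.ofN (n : ℕ) : M7 := Option.some n

instance : DecidableEq M7 := inferInstanceAs (DecidableEq (Option ℕ))

/-- The group-completion map `M7 → ℤ`, sending `0'` to `0` and `n` to `n`. -/
def M7.gammaFun : M7 → ℤ
  | Option.none => 0
  | Option.some n => (n : ℤ)

@[simp] lemma M7.add_def (a b : M7) : a + b = M7.add a b := rfl

/-- The group-completion homomorphism `γ : M7 →+ ℤ`. -/
def M7.gamma : M7 →+ ℤ where
  toFun := M7.gammaFun
  map_zero' := rfl
  map_add' a b := by
    show M7.gammaFun (M7.add a b) = M7.gammaFun a + M7.gammaFun b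
    rcases a with _ | (_ | a) <;> rcases b with _ | (_ | b) <;>
      simp [M7.add_def, M7.add, M7.gammaFun] <;> omega

/-- The inclusion of the two-element subgroup `{0, 0'} ≅ ℤ/2` of `M7`. -/
def M7.e : ZMod 2 →+ M7 where
  toFun := fun x => if x = 0 then M7.ofN 0 else M7.zero'
  map_zero' := by decide
  map_add' := by decide

/-!
The square is a pullback because `M7.e` identifies `{0, 0'}` with the kernel of `γ`, and a
pullback of commutative monoids can be checked on underlying sets. After group completion the
corner becomes `ℤ/2`; its map to `ℤ` kills the torsion, and the base change of the identity of
`ℤ` along `0 → ℤ` is `0`, not `ℤ/2`.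
-/

open CategoryTheory Limits

universe u

theorem AddCommMonCat.isPullback_of_injective_of_mrange_eq_mker {A M N : Type u}
    [AddCommMonoid A] [AddCommMonoid M] [AddCommMonoid N] {f : A →+ M} {g : M →+ N}
    (hf : Function.Injective f) (hfg : AddMonoidHom.mrange f = AddMonoidHom.mker g) :
    IsPullback (AddCommMonCat.ofHom (0 : A →+ PUnit)) (AddCommMonCat.ofHom f)
      (AddCommMonCat.ofHom (0 : PUnit →+ N)) (AddCommMonCat.ofHom g) := by
  have hw : CommSq (AddCommMonCat.ofHom (0 : A →+ PUnit)) (AddCommMonCat.ofHom f)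
      (AddCommMonCat.ofHom (0 : PUnit →+ N)) (AddCommMonCat.ofHom g) := ⟨by
    ext a
    exact (hfg ▸ AddMonoidHom.mem_mrange.2 ⟨a, rfl⟩ : f a ∈ AddMonoidHom.mker g).symm⟩
  refine IsPullback.of_map (forget AddCommMonCat.{u}) hw.w ?_
  rw [Types.isPullback_iff]
  refine ⟨(forget AddCommMonCat.{u}).congr_map hw.w, fun a b h => hf h.2, fun _ m hm => ?_⟩
  obtain ⟨a, rfl⟩ : m ∈ AddMonoidHom.mrange f := hfg ▸ hm.symm
  exact ⟨a, rfl, rfl⟩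

theorem AddCommGrpCat.not_isPullback_zero_id {A B : Type u} [AddCommGroup A] [AddCommGroup B]
    [Nontrivial A] (g : AddCommGrpCat.of A ⟶ AddCommGrpCat.of B) :
    ¬ IsPullback (AddCommGrpCat.ofHom (0 : A →+ PUnit)) g
      (AddCommGrpCat.ofHom (0 : PUnit →+ B)) (𝟙 (AddCommGrpCat.of B)) := by
  intro h
  have : IsIso (AddCommGrpCat.ofHom (0 : A →+ PUnit)) := h.isIso_fst_of_isIso
  have hinj : Function.Injective (0 : A →+ PUnit) :=
    (AddCommGrpCat.mono_iff_injective (AddCommGrpCat.ofHom 0)).1 inferInstance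
  obtain ⟨x, y, hxy⟩ := exists_pair_ne A
  exact hxy (hinj rfl)

theorem AddMonoidHom.not_injective_of_finite {G H : Type*} [AddGroup G] [Finite G]
    [Nontrivial G] [AddMonoid H] [IsAddTorsionFree H] (g : G →+ H) : ¬ Function.Injective g := by
  intro hg
  obtain ⟨x, hx⟩ := exists_ne (0 : G)
  have hgx : g x = 0 := (g.isOfFinAddOrder (isOfFinAddOrder_of_finite x)).eq_zero'
  exact hx (hg (by rw [hgx, map_zero]))

theorem M7.e_injective : Function.Injective M7.e := by
  decide

theorem M7.mrange_e_eq_mker_gamma : AddMonoidHom.mrange M7.e = AddMonoidHom.mker M7.gamma := by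
  ext m
  rw [AddMonoidHom.mem_mrange, AddMonoidHom.mem_mker]
  constructor
  · rintro ⟨x, rfl⟩
    revert x
    decide
  · rcases m with _ | n
    · exact fun _ => ⟨1, rfl⟩
    · intro h
      obtain rfl : n = 0 := Int.natCast_eq_zero.1 h
      exact ⟨0, rfl⟩

/-- the square with corners `{0,0'} ≅ ℤ/2`, `{0}`, `M = ℕ ∪ {0'}`, `ℤ` is a
pullback of commutative monoids, but applying group completion yields the square
`ℤ/2 → 0`, `ℤ/2 → ℤ`, `0 → ℤ`, `ℤ = ℤ` which is not a pullback of abelian groups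
(whatever the induced map `ℤ/2 → ℤ` is): indeed no homomorphism `ℤ/2 → ℤ` is injective,
while the pullback of `0 → ℤ ← ℤ` is trivial. -/
theorem group_completion_does_not_preserve_pullbacks :
    IsPullback (AddCommMonCat.ofHom (0 : ZMod 2 →+ PUnit))
        (AddCommMonCat.ofHom M7.e)
        (AddCommMonCat.ofHom (0 : PUnit →+ ℤ))
        (AddCommMonCat.ofHom M7.gamma) ∧
      (∀ g : ZMod 2 →+ ℤ, ¬ Function.Injective g) ∧
      ∀ g : AddCommGrpCat.of (ZMod 2) ⟶ AddCommGrpCat.of ℤ,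
        ¬ IsPullback (AddCommGrpCat.ofHom (0 : ZMod 2 →+ PUnit)) g
            (AddCommGrpCat.ofHom (0 : PUnit →+ ℤ)) (𝟙 (AddCommGrpCat.of ℤ)) :=
  ⟨AddCommMonCat.isPullback_of_injective_of_mrange_eq_mker M7.e_injective
      M7.mrange_e_eq_mker_gamma,
    fun g => g.not_injective_of_finite,
    AddCommGrpCat.not_isPullback_zero_id⟩
end
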